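/- Let k > 0, β ∈ ℝ, C > 0, L > 0, d = 2, and let W : ℝ × ℝ² × ℝ² → ℂ be a smooth solution, on the region p ≠ 0, of the transverse Fokker–Planck equation ∂_z W + p·∇_x W = −kC ( i∇_p − (β/(2k)) x ) · ( |p|^{-1} p̂⊥ ⊗ p̂⊥ ) · ( i∇_p − (β/(2k)) x ) W, where p̂⊥ is a unit vector field orthogonal to p. Set σ* = C^{1/3} L^{4/3} k^{-1/6}, ℓ_c = L/(k σ*), β_c = k ℓ_c / σ*, and β̃ = β/β_c. Then W̃(z̃, x̃, p̃) := W(L z̃, σ* √k x̃, p̃/(ℓ_c √k)) is a smooth solution, for p̃ ≠ 0, of the parameter-free equation ∂_{z̃} W̃ + p̃·∇_{x̃} W̃ = − ( −i∇_{p̃} + (β̃/2) x̃ ) · ( |p̃|^{-1} p̂̃⊥ ⊗ p̂̃⊥ ) · ( −i∇_{p̃} + (β̃/2) x̃ ) W̃, where p̂̃⊥ ⊗ p̂̃⊥ is the projection orthogonal to p̃ (which is unchanged under the rescaling of p). Consequently in the transverse case the spatial spread scales as σ* ∼ C^{1/3} L^{4/3} k^{-1/6}. -/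

import Mathlib

open MeasureTheory

noncomputable section

/-- The operator `f ↦ (i ∂_{p_j} - c x_j) f` acting on phase-space functions `f(x,p)`. -/
def momOp (c : ℝ) (j : Fin 2)
    (f : EuclideanSpace ℝ (Fin 2) → EuclideanSpace ℝ (Fin 2) → ℂ) :
    EuclideanSpace ℝ (Fin 2) → EuclideanSpace ℝ (Fin 2) → ℂ :=
  fun x p =>
    Complex.I * fderiv ℝ (f x) p (EuclideanSpace.single j 1) - ((c * x j : ℝ) : ℂ) * f x p

/-- The operator `f ↦ (-i ∂_{p_j} + c x_j) f` acting on phase-space functions `f(x,p)`. -/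
def negMomOp (c : ℝ) (j : Fin 2)
    (f : EuclideanSpace ℝ (Fin 2) → EuclideanSpace ℝ (Fin 2) → ℂ) :
    EuclideanSpace ℝ (Fin 2) → EuclideanSpace ℝ (Fin 2) → ℂ :=
  fun x p =>
    -(Complex.I * fderiv ℝ (f x) p (EuclideanSpace.single j 1)) + ((c * x j : ℝ) : ℂ) * f x p


private lemma fderiv_comp_smul' {E F : Type*} [NormedAddCommGroup E] [NormedSpace ℝ E]
    [NormedAddCommGroup F] [NormedSpace ℝ F]
    (f : E → F) {c : ℝ} (hc : c ≠ 0) (x v : E) :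
    fderiv ℝ (fun y => f (c • y)) x v = c • fderiv ℝ f (c • x) v := by
  by_cases h : DifferentiableAt ℝ f (c • x)
  · have hg : DifferentiableAt ℝ (fun y : E => c • y) x :=
      (differentiable_id.const_smul c).differentiableAt
    have hcomp := fderiv_comp (𝕜 := ℝ) x h hg
    have hfd : fderiv ℝ (fun y : E => c • y) x = c • (ContinuousLinearMap.id ℝ E) := by
      have h1 : (fun y : E => c • y) = ⇑(c • (ContinuousLinearMap.id ℝ E)) := by
        ext y; simp
      rw [h1, ContinuousLinearMap.fderiv]
    have h2 : (fun y => f (c • y)) = f ∘ (fun y : E => c • y) := rfl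
    rw [h2, hcomp, hfd]
    simp
  · have h2 : ¬ DifferentiableAt ℝ (fun y => f (c • y)) x := by
      intro hd
      apply h
      have hg : DifferentiableAt ℝ (fun y : E => c⁻¹ • y) (c • x) :=
        (differentiable_id.const_smul c⁻¹).differentiableAt
      have hd' : DifferentiableAt ℝ (fun y => f (c • y)) ((fun y : E => c⁻¹ • y) (c • x)) := by
        simpa [smul_smul, inv_mul_cancel₀ hc] using hd
      have h3 := DifferentiableAt.comp (c • x) hd' hg
      simpa [Function.comp_def, smul_smul, mul_inv_cancel₀ hc] using h3
    rw [fderiv_zero_of_not_differentiableAt h, fderiv_zero_of_not_differentiableAt h2]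
    simp

private lemma fderiv_const_mul'' {E : Type*} [NormedAddCommGroup E] [NormedSpace ℝ E]
    (f : E → ℂ) {c : ℂ} (hc : c ≠ 0) (x v : E) :
    fderiv ℝ (fun y => c * f y) x v = c * fderiv ℝ f x v := by
  by_cases h : DifferentiableAt ℝ f x
  · rw [fderiv_const_mul h c]; simp
  · have h2 : ¬ DifferentiableAt ℝ (fun y => c * f y) x := by
      intro hd
      apply h
      have h3 := hd.const_mul c⁻¹
      simpa [← mul_assoc, inv_mul_cancel₀ hc] using h3
    rw [fderiv_zero_of_not_differentiableAt h, fderiv_zero_of_not_differentiableAt h2]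
    simp

private lemma deriv_comp_const_mul'' (g : ℝ → ℂ) {c : ℝ} (hc : c ≠ 0) (t : ℝ) :
    deriv (fun s => g (c * s)) t = (c : ℂ) * deriv g (c * t) := by
  rw [show deriv (fun s => g (c * s)) t = fderiv ℝ (fun s => g (c * s)) t 1 from rfl,
      show deriv g (c * t) = fderiv ℝ g (c * t) 1 from rfl]
  have h := fderiv_comp_smul' (F := ℂ) g hc t (1 : ℝ)
  simpa [smul_eq_mul, Complex.real_smul] using h

private lemma negMomOp_rescale
    (f g : EuclideanSpace ℝ (Fin 2) → EuclideanSpace ℝ (Fin 2) → ℂ)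
    (a b c c' e : ℝ) (hb : b ≠ 0) (he : e ≠ 0)
    (hcc : c' * b = c * a)
    (hfg : ∀ x' p', f x' p' = (e : ℂ) * g (a • x') (b⁻¹ • p'))
    (j : Fin 2) (x p : EuclideanSpace ℝ (Fin 2)) :
    negMomOp c' j f x p = ((-(e * b⁻¹) : ℝ) : ℂ) * momOp c j g (a • x) (b⁻¹ • p) := by
  have hfx : f x = fun q => (e : ℂ) * g (a • x) (b⁻¹ • q) := funext (hfg x)
  unfold negMomOp momOp
  rw [hfx]
  rw [show fderiv ℝ (fun q => (e : ℂ) * g (a • x) (b⁻¹ • q)) p (EuclideanSpace.single j 1)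
      = (e : ℂ) * fderiv ℝ (fun q => g (a • x) (b⁻¹ • q)) p (EuclideanSpace.single j 1) from
    fderiv_const_mul'' _ (by exact_mod_cast he) p _]
  rw [fderiv_comp_smul' (g (a • x)) (inv_ne_zero hb) p (EuclideanSpace.single j 1)]
  have hxj : ((a • x : EuclideanSpace ℝ (Fin 2)) j : ℝ) = a * x j := by
    simp
  rw [hxj]
  have hco : c' * x j = b⁻¹ * (c * (a * x j)) := by
    have h1 : c' = b⁻¹ * (c * a) := by
      field_simp
      linarith [hcc]
    rw [h1]
    ring
  rw [hco]
  have hD : (b⁻¹ : ℝ) • fderiv ℝ (g (a • x)) (b⁻¹ • p) (EuclideanSpace.single j 1)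
      = ((b⁻¹ : ℝ) : ℂ) * fderiv ℝ (g (a • x)) (b⁻¹ • p) (EuclideanSpace.single j 1) :=
    Complex.real_smul
  rw [hD]
  push_cast
  ring

/-- rescaling a smooth solution of the transverse Fokker–Planck equation in
`d = 2` by `σ* = C^{1/3} L^{4/3} k^{-1/6}`, `ℓ_c = L/(kσ*)`, `β_c = kℓ_c/σ*` yields a smooth
solution of the parameter-free transverse equation; in particular the spatial spread scales
as `σ* ∼ C^{1/3} L^{4/3} k^{-1/6}`. -/
theorem transverse_fokker_planck_rescaling
    (k β C L : ℝ) (hk : 0 < k) (hC : 0 < C) (hL : 0 < L)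
    (σ ℓ βc β' : ℝ)
    (hσ : σ = C ^ ((1 : ℝ) / 3) * L ^ ((4 : ℝ) / 3) * k ^ (-(1 : ℝ) / 6))
    (hℓ : ℓ = L / (k * σ)) (hβc : βc = k * ℓ / σ) (hβ' : β' = β / βc)
    -- a measurable unit vector field orthogonal to p
    (pperp : EuclideanSpace ℝ (Fin 2) → EuclideanSpace ℝ (Fin 2))
    (hunit : ∀ p : EuclideanSpace ℝ (Fin 2), p ≠ 0 → ‖pperp p‖ = 1)
    (horth : ∀ p : EuclideanSpace ℝ (Fin 2), p ≠ 0 → (inner ℝ p (pperp p) : ℝ) = 0)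
    (W : ℝ → EuclideanSpace ℝ (Fin 2) → EuclideanSpace ℝ (Fin 2) → ℂ)
    (hWsmooth : ContDiffOn ℝ (⊤ : ℕ∞)
      (fun zxp : ℝ × (EuclideanSpace ℝ (Fin 2) × EuclideanSpace ℝ (Fin 2)) =>
        W zxp.1 zxp.2.1 zxp.2.2)
      {zxp : ℝ × (EuclideanSpace ℝ (Fin 2) × EuclideanSpace ℝ (Fin 2)) | zxp.2.2 ≠ 0})
    (hPDE : ∀ z x p, p ≠ (0 : EuclideanSpace ℝ (Fin 2)) →
      deriv (fun z' => W z' x p) z +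
        (∑ j : Fin 2, ((p j : ℝ) : ℂ) *
          fderiv ℝ (fun x' => W z x' p) x (EuclideanSpace.single j 1)) =
      -((k * C : ℝ) : ℂ) *
        ∑ j : Fin 2, momOp (β / (2 * k)) j
          (fun x' p' => ∑ l : Fin 2,
            ((‖p'‖⁻¹ * pperp p' j * pperp p' l : ℝ) : ℂ) *
              momOp (β / (2 * k)) l (W z) x' p') x p)
    (Wt : ℝ → EuclideanSpace ℝ (Fin 2) → EuclideanSpace ℝ (Fin 2) → ℂ)
    (hWt : ∀ zt xt pt, Wt zt xt pt =
      W (L * zt) ((σ * Real.sqrt k) • xt) ((ℓ * Real.sqrt k)⁻¹ • pt)) :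
    ContDiffOn ℝ (⊤ : ℕ∞)
      (fun zxp : ℝ × (EuclideanSpace ℝ (Fin 2) × EuclideanSpace ℝ (Fin 2)) =>
        Wt zxp.1 zxp.2.1 zxp.2.2)
      {zxp : ℝ × (EuclideanSpace ℝ (Fin 2) × EuclideanSpace ℝ (Fin 2)) | zxp.2.2 ≠ 0} ∧
    ∀ zt xt pt, pt ≠ (0 : EuclideanSpace ℝ (Fin 2)) →
      deriv (fun z' => Wt z' xt pt) zt +
        (∑ j : Fin 2, ((pt j : ℝ) : ℂ) *
          fderiv ℝ (fun x' => Wt zt x' pt) xt (EuclideanSpace.single j 1)) =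
      -∑ j : Fin 2, negMomOp (β' / 2) j
        (fun x' p' => ∑ l : Fin 2,
          ((‖p'‖⁻¹ * pperp ((ℓ * Real.sqrt k)⁻¹ • p') j *
              pperp ((ℓ * Real.sqrt k)⁻¹ • p') l : ℝ) : ℂ) *
            negMomOp (β' / 2) l (Wt zt) x' p') xt pt := by
  have hσpos : 0 < σ := by rw [hσ]; positivity
  have hℓpos : 0 < ℓ := by rw [hℓ]; positivity
  have hβcpos : 0 < βc := by rw [hβc]; positivity
  have hs : 0 < Real.sqrt k := Real.sqrt_pos.mpr hk
  have hsq : Real.sqrt k * Real.sqrt k = k := Real.mul_self_sqrt hk.le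
  obtain ⟨a, ha⟩ : ∃ a, a = σ * Real.sqrt k := ⟨_, rfl⟩
  obtain ⟨b, hbdef⟩ : ∃ b, b = ℓ * Real.sqrt k := ⟨_, rfl⟩
  rw [← ha, ← hbdef] at hWt
  rw [← hbdef]
  have hapos : 0 < a := by rw [ha]; positivity
  have hbpos : 0 < b := by rw [hbdef]; positivity
  have ha0 : a ≠ 0 := hapos.ne'
  have hb0 : b ≠ 0 := hbpos.ne'
  have hab : a * b = L := by
    rw [ha, hbdef, hℓ]; field_simp; linear_combination hsq
  have hcc : (β' / 2) * b = (β / (2 * k)) * a := by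
    rw [ha, hbdef, hβ', hβc, hℓ]; field_simp
  have hσ3 : σ ^ 3 * Real.sqrt k = C * L ^ 4 := by
    rw [hσ]
    rw [mul_pow, mul_pow]
    rw [← Real.rpow_natCast (C ^ ((1:ℝ)/3)) 3, ← Real.rpow_mul hC.le]
    rw [← Real.rpow_natCast (L ^ ((4:ℝ)/3)) 3, ← Real.rpow_mul hL.le]
    rw [← Real.rpow_natCast (k ^ (-(1:ℝ)/6)) 3, ← Real.rpow_mul hk.le]
    norm_num
    rw [Real.rpow_neg hk.le, ← Real.sqrt_eq_rpow]
    field_simp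
  have hb3 : -(-(b⁻¹ * b⁻¹) * b⁻¹) = k * C * L := by
    have hkσ3 : k * σ ^ 3 = Real.sqrt k * (C * L ^ 4) := by
      rw [← hσ3]; linear_combination (-(σ^3)) * hsq
    have hcube : (ℓ * Real.sqrt k) ^ 3 * (k * C * L) = 1 := by
      rw [hℓ]
      field_simp
      linear_combination (C * L ^ 4 * Real.sqrt k) * hsq - k * hkσ3
    have hbne : ℓ * Real.sqrt k ≠ 0 := by positivity
    rw [hbdef]
    field_simp
    linear_combination -hcube
  constructor
  · have hmap : ContDiff ℝ (⊤ : WithTop ℕ∞)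
        (fun zxp : ℝ × (EuclideanSpace ℝ (Fin 2) × EuclideanSpace ℝ (Fin 2)) =>
          ((L * zxp.1, (a • zxp.2.1, b⁻¹ • zxp.2.2)) :
            ℝ × (EuclideanSpace ℝ (Fin 2) × EuclideanSpace ℝ (Fin 2)))) := by
      fun_prop
    have heq : (fun zxp : ℝ × (EuclideanSpace ℝ (Fin 2) × EuclideanSpace ℝ (Fin 2)) =>
        Wt zxp.1 zxp.2.1 zxp.2.2)
        = (fun zxp : ℝ × (EuclideanSpace ℝ (Fin 2) × EuclideanSpace ℝ (Fin 2)) =>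
            W zxp.1 zxp.2.1 zxp.2.2) ∘
          (fun zxp : ℝ × (EuclideanSpace ℝ (Fin 2) × EuclideanSpace ℝ (Fin 2)) =>
            (L * zxp.1, (a • zxp.2.1, b⁻¹ • zxp.2.2))) := by
      funext zxp
      exact hWt zxp.1 zxp.2.1 zxp.2.2
    rw [heq]
    have hmapOn : ContDiffOn ℝ (⊤ : ℕ∞)
        (fun zxp : ℝ × (EuclideanSpace ℝ (Fin 2) × EuclideanSpace ℝ (Fin 2)) =>
          ((L * zxp.1, (a • zxp.2.1, b⁻¹ • zxp.2.2)) :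
            ℝ × (EuclideanSpace ℝ (Fin 2) × EuclideanSpace ℝ (Fin 2))))
        {zxp : ℝ × (EuclideanSpace ℝ (Fin 2) × EuclideanSpace ℝ (Fin 2)) | zxp.2.2 ≠ 0} :=
      (hmap.of_le le_top).contDiffOn
    exact hWsmooth.comp hmapOn
      (fun zxp hz => smul_ne_zero (inv_ne_zero hb0) hz)
  · intro zt xt pt hpt
    have hp : (b⁻¹ • pt : EuclideanSpace ℝ (Fin 2)) ≠ 0 :=
      smul_ne_zero (inv_ne_zero hb0) hpt
    have hnorm : ∀ p' : EuclideanSpace ℝ (Fin 2),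
        ‖p'‖⁻¹ = b⁻¹ * ‖(b⁻¹ • p' : EuclideanSpace ℝ (Fin 2))‖⁻¹ := by
      intro p'
      rw [norm_smul, Real.norm_eq_abs, abs_of_pos (inv_pos.mpr hbpos), mul_inv, inv_inv,
          ← mul_assoc, inv_mul_cancel₀ hb0, one_mul]
    have stepB : ∀ (l : Fin 2) (x' p' : EuclideanSpace ℝ (Fin 2)),
        negMomOp (β' / 2) l (Wt zt) x' p'
          = ((-(1 * b⁻¹) : ℝ) : ℂ) * momOp (β / (2 * k)) l (W (L * zt)) (a • x') (b⁻¹ • p') :=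
      fun l x' p' => negMomOp_rescale (Wt zt) (W (L * zt)) a b (β / (2 * k)) (β' / 2) 1
        hb0 one_ne_zero hcc (fun x' p' => by rw [hWt]; norm_num) l x' p'
    have stepF : ∀ (j : Fin 2) (x' p' : EuclideanSpace ℝ (Fin 2)),
        (∑ l : Fin 2, ((‖p'‖⁻¹ * pperp (b⁻¹ • p') j * pperp (b⁻¹ • p') l : ℝ) : ℂ) *
            negMomOp (β' / 2) l (Wt zt) x' p')
        = ((-(b⁻¹ * b⁻¹) : ℝ) : ℂ) *
          (fun x'' q => ∑ l : Fin 2, ((‖q‖⁻¹ * pperp q j * pperp q l : ℝ) : ℂ) *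
            momOp (β / (2 * k)) l (W (L * zt)) x'' q) (a • x') (b⁻¹ • p') := by
      intro j x' p'
      show _ = ((-(b⁻¹ * b⁻¹) : ℝ) : ℂ) *
        ∑ l : Fin 2, ((‖(b⁻¹ • p' : EuclideanSpace ℝ (Fin 2))‖⁻¹ * pperp (b⁻¹ • p') j *
            pperp (b⁻¹ • p') l : ℝ) : ℂ) *
          momOp (β / (2 * k)) l (W (L * zt)) (a • x') (b⁻¹ • p')
      rw [Finset.mul_sum]
      refine Finset.sum_congr rfl fun l _ => ?_
      rw [stepB l x' p', hnorm p']
      push_cast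
      ring
    have hRHS : ∀ j : Fin 2,
        negMomOp (β' / 2) j
          (fun x' p' => ∑ l : Fin 2,
            ((‖p'‖⁻¹ * pperp (b⁻¹ • p') j * pperp (b⁻¹ • p') l : ℝ) : ℂ) *
              negMomOp (β' / 2) l (Wt zt) x' p') xt pt
        = ((-(-(b⁻¹ * b⁻¹) * b⁻¹) : ℝ) : ℂ) *
          momOp (β / (2 * k)) j
            (fun x'' q => ∑ l : Fin 2, ((‖q‖⁻¹ * pperp q j * pperp q l : ℝ) : ℂ) *
              momOp (β / (2 * k)) l (W (L * zt)) x'' q) (a • xt) (b⁻¹ • pt) :=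
      fun j => negMomOp_rescale _ _ a b (β / (2 * k)) (β' / 2) (-(b⁻¹ * b⁻¹)) hb0
        (neg_ne_zero.mpr (mul_ne_zero (inv_ne_zero hb0) (inv_ne_zero hb0))) hcc
        (stepF j) j xt pt
    have hLz : deriv (fun z' => Wt z' xt pt) zt
        = (L : ℂ) * deriv (fun z' => W z' (a • xt) (b⁻¹ • pt)) (L * zt) := by
      have h1 : (fun z' => Wt z' xt pt)
          = fun z' => (fun z => W z (a • xt) (b⁻¹ • pt)) (L * z') :=
        funext fun z' => hWt z' xt pt
      rw [h1]
      exact deriv_comp_const_mul'' (fun z => W z (a • xt) (b⁻¹ • pt)) hL.ne' zt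
    have hLx : ∀ j : Fin 2,
        fderiv ℝ (fun x' => Wt zt x' pt) xt (EuclideanSpace.single j 1)
          = a • fderiv ℝ (fun x' => W (L * zt) x' (b⁻¹ • pt)) (a • xt)
              (EuclideanSpace.single j 1) := by
      intro j
      have h1 : (fun x' => Wt zt x' pt)
          = fun x' => (fun x'' => W (L * zt) x'' (b⁻¹ • pt)) (a • x') :=
        funext fun x' => hWt zt x' pt
      rw [h1]
      exact fderiv_comp_smul' (fun x'' => W (L * zt) x'' (b⁻¹ • pt)) ha0 xt (EuclideanSpace.single j 1)
    have hPDE' := hPDE (L * zt) (a • xt) (b⁻¹ • pt) hp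
    have hcoord : ∀ j : Fin 2,
        ((b⁻¹ • pt : EuclideanSpace ℝ (Fin 2)) j : ℝ) = b⁻¹ * pt j := fun j => by simp
    have haL : a = L * b⁻¹ := by
      field_simp
      linarith [hab]
    simp only [Fin.sum_univ_two] at hPDE' hRHS ⊢
    rw [hLz, hLx 0, hLx 1, hRHS 0, hRHS 1, hb3]
    rw [hcoord 0, hcoord 1] at hPDE'
    rw [haL] at hPDE' ⊢
    simp only [Complex.real_smul]
    push_cast at hPDE' ⊢
    linear_combination (L : ℂ) * hPDE'
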